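/- arXiv:2112.08884 — 3 statements merged into one kernel-verified Lean document; each statement's English description precedes it below -/
import Mathlib

section
/- Let C be a coloured Petri net, U its unfolding and S its skeleton, related by the net morphism μ with μ([p,c]) = p and μ([t,g]) = t. The extension σ of μ to markings, defined by σ(m_U)(p) = Σ_{c ∈ χ(p)} m_U([p,c]), is a surjective function from the markings of U (reachable and non-reachable) onto the markings of S, and it is an abstraction relation: for every marking m_S of S and every atomic proposition a_S of S with unfolding a_U, m_S satisfies a_S if and only if every marking m_U of U with σ(m_U) = m_S satisfies a_U. -/
set_option autoImplicit false

/-- A place/transition net: weight functions for arcs (weight 0 encodes "no arc")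
and an initial marking. -/
structure PTNet (P T : Type) where
  pre : P → T → ℕ
  post : T → P → ℕ
  m0 : P → ℕ

/-- Transition `t` is enabled in marking `m`. -/
def PTNet.Enabled {P T : Type} (N : PTNet P T) (m : P → ℕ) (t : T) : Prop :=
  ∀ p, N.pre p t ≤ m p

/-- Firing `t` leads from marking `m` to marking `m'` (written `m →t m'`). -/
def PTNet.Fires {P T : Type} (N : PTNet P T) (m : P → ℕ) (t : T) (m' : P → ℕ) : Prop :=
  N.Enabled m t ∧ ∀ p, m' p = m p - N.pre p t + N.post t p

/-- A (uniform) coloured Petri net: arc weights are finite sets of variables, each place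
has a finite nonempty colour domain, each transition has a guard, and the initial marking
puts a multiset over `chi p` on each place `p`. -/
structure ColouredNet (P T Var Colour : Type) where
  Wpre : P → T → Finset Var
  Wpost : T → P → Finset Var
  chi : P → Finset Colour
  chi_nonempty : ∀ p, (chi p).Nonempty
  guard : T → (Var → Colour) → Prop
  m0 : P → Colour → ℕ
  m0_supp : ∀ p c, c ∉ chi p → m0 p c = 0

/-- A firing mode of transition `t`: an assignment of colours to variables that respects
the colour domains of the adjacent places and satisfies the guard of `t`. -/
def IsMode {P T Var Colour : Type} (C : ColouredNet P T Var Colour) (t : T)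
    (g : Var → Colour) : Prop :=
  (∀ p, ∀ x ∈ C.Wpre p t, g x ∈ C.chi p) ∧
  (∀ p, ∀ x ∈ C.Wpost t p, g x ∈ C.chi p) ∧ C.guard t g

/-- Places of the unfolding: pairs `[p,c]` with `c` in the colour domain of `p`. -/
abbrev UPlace {P T Var Colour : Type} (C : ColouredNet P T Var Colour) : Type :=
  {pc : P × Colour // pc.2 ∈ C.chi pc.1}

/-- Transitions of the unfolding: pairs `[t,g]` where `g` is a firing mode of `t`. -/
abbrev UTrans {P T Var Colour : Type} (C : ColouredNet P T Var Colour) : Type :=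
  {tg : T × (Var → Colour) // IsMode C tg.1 tg.2}

/-- The unfolding of a coloured net, as a P/T net. -/
def unfoldNet {P T Var Colour : Type} [DecidableEq Colour]
    (C : ColouredNet P T Var Colour) : PTNet (UPlace C) (UTrans C) where
  pre := fun pc tg =>
    ((C.Wpre pc.val.1 tg.val.1).filter (fun x => tg.val.2 x = pc.val.2)).card
  post := fun tg pc =>
    ((C.Wpost tg.val.1 pc.val.1).filter (fun x => tg.val.2 x = pc.val.2)).card
  m0 := fun pc => C.m0 pc.val.1 pc.val.2

/-- The skeleton of a coloured net, as a P/T net. -/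
def skelNet {P T Var Colour : Type} (C : ColouredNet P T Var Colour) : PTNet P T where
  pre := fun p t => (C.Wpre p t).card
  post := fun t p => (C.Wpost t p).card
  m0 := fun p => ∑ c ∈ C.chi p, C.m0 p c

/-- An atomic proposition `k₁p₁ + … + kₙpₙ ≤ k`, given by integer coefficients and a bound. -/
structure AtomicProp (P : Type) where
  coeff : P → ℤ
  bound : ℤ

/-- Satisfaction of an atomic proposition by a marking of a P/T net. -/
def APsatPT {P : Type} [Fintype P] (a : AtomicProp P) (m : P → ℕ) : Prop :=
  ∑ p : P, a.coeff p * (m p : ℤ) ≤ a.bound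

/-- Satisfaction, by a marking of the unfolding, of the unfolding of an atomic proposition
(each place `p` is substituted by the sum of the places `[p,c]` for `c ∈ chi p`). -/
def APsatU {P T Var Colour : Type} [Fintype P] [Fintype Colour] [DecidableEq Colour]
    (C : ColouredNet P T Var Colour) (a : AtomicProp P) (m : UPlace C → ℕ) : Prop :=
  ∑ u : UPlace C, a.coeff u.val.1 * (m u : ℤ) ≤ a.bound

/-- Extension of the net morphism from the unfolding to the skeleton to markings:
`σ(m)(p) = ∑_{c ∈ chi p} m [p,c]`. -/
def skel {P T Var Colour : Type} (C : ColouredNet P T Var Colour)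
    (m : UPlace C → ℕ) : P → ℕ :=
  fun p => ∑ c ∈ (C.chi p).attach, m ⟨(p, c.val), c.property⟩

/-! The unfolded proposition evaluates a marking `m` of the unfolding exactly as the original
proposition evaluates `skel C m`: regrouping the places `[p,c]` of the unfolding by `p` turns
`∑ [p,c], k_p m[p,c]` into `∑ p, k_p (∑ c, m[p,c])`. So satisfaction is constant on the fibres
of `skel C`, and `skel C` is onto since every colour domain is nonempty: all tokens of a
skeleton place can be put on one colour. -/

section Unfolding

variable {P T Var Colour : Type} [Fintype P] [Fintype Colour] [DecidableEq Colour]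
  (C : ColouredNet P T Var Colour)

theorem sum_uplace_eq_sum_attach {M : Type} [AddCommMonoid M] (f : UPlace C → M) :
    ∑ u : UPlace C, f u = ∑ p : P, ∑ c ∈ (C.chi p).attach, f ⟨(p, c.val), c.property⟩ := by
  rw [← (Equiv.subtypeProdEquivSigmaSubtype fun p c => c ∈ C.chi p).symm.sum_comp,
    Fintype.sum_sigma]
  exact Finset.sum_congr rfl fun p _ => by rw [Finset.univ_eq_attach]; rfl

theorem sum_coeff_mul_eq_sum_coeff_mul_skel (k : P → ℤ) (m : UPlace C → ℕ) :
    ∑ u : UPlace C, k u.val.1 * (m u : ℤ) = ∑ p : P, k p * (skel C m p : ℤ) := by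
  rw [sum_uplace_eq_sum_attach]
  simp only [skel, Nat.cast_sum, Finset.mul_sum]

theorem apsatU_iff_apsatPT_skel (a : AtomicProp P) (m : UPlace C → ℕ) :
    APsatU C a m ↔ APsatPT a (skel C m) := by
  rw [APsatU, APsatPT, sum_coeff_mul_eq_sum_coeff_mul_skel]

end Unfolding

theorem skel_surjective {P T Var Colour : Type} (C : ColouredNet P T Var Colour) :
    Function.Surjective (skel C) := by
  classical
  intro mS
  choose c₀ hc₀ using C.chi_nonempty
  refine ⟨fun u => if u.val.2 = c₀ u.val.1 then mS u.val.1 else 0, funext fun p => ?_⟩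
  simp only [skel]
  rw [Finset.sum_attach (C.chi p) fun c => if c = c₀ p then mS p else 0,
    Finset.sum_ite_eq' _ _ _, if_pos (hc₀ p)]

theorem skel_is_abstraction_general
    {P T Var Colour : Type} [Fintype P] [Fintype Colour]
    [DecidableEq Colour]
    (C : ColouredNet P T Var Colour) :
    Function.Surjective (skel C) ∧
      ∀ (mS : P → ℕ) (a : AtomicProp P),
        APsatPT a mS ↔ ∀ mU : UPlace C → ℕ, skel C mU = mS → APsatU C a mU := by
  refine ⟨skel_surjective C, fun mS a => ⟨?_, fun h => ?_⟩⟩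
  · rintro hS mU rfl
    exact (apsatU_iff_apsatPT_skel C a mU).mpr hS
  · obtain ⟨mU, rfl⟩ := skel_surjective C mS
    exact (apsatU_iff_apsatPT_skel C a mU).mp (h mU rfl)

/-- The extension `σ = skel C` of the net morphism to markings is a
surjective function from the markings of the unfolding onto the markings of the skeleton,
and it is an abstraction relation: a skeleton marking satisfies an atomic proposition iff
all of its preimages satisfy the unfolded proposition. -/
theorem skel_is_abstraction
    {P T Var Colour : Type} [Fintype P] [Fintype T] [Fintype Var] [Fintype Colour]
    [DecidableEq Colour]
    (C : ColouredNet P T Var Colour) :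
    Function.Surjective (skel C) ∧
      ∀ (mS : P → ℕ) (a : AtomicProp P),
        APsatPT a mS ↔ ∀ mU : UPlace C → ℕ, skel C mU = mS → APsatU C a mU :=
  skel_is_abstraction_general C
end

section
/- Let C be a uniform coloured Petri net. Then C has a deadlock-preserving skeleton if and only if every minimal transition class of C with respect to the partial order ≤ on equivalence classes is full. -/
set_option autoImplicit false

/-- A marking of a coloured net: a multiset over `chi p` on each place `p`. -/
def IsCMarking {P T Var Colour : Type} (C : ColouredNet P T Var Colour)
    (m : P → Colour → ℕ) : Prop :=
  ∀ p c, c ∉ C.chi p → m p c = 0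

/-- Transition `t` is enabled in coloured marking `m` under firing mode `g`. -/
def EnabledC {P T Var Colour : Type} [DecidableEq Colour] (C : ColouredNet P T Var Colour)
    (m : P → Colour → ℕ) (t : T) (g : Var → Colour) : Prop :=
  IsMode C t g ∧ ∀ p c, ((C.Wpre p t).filter (fun x => g x = c)).card ≤ m p c

/-- A dead marking (deadlock) of a coloured net: no transition is enabled in any firing
mode. -/
def DeadC {P T Var Colour : Type} [DecidableEq Colour] (C : ColouredNet P T Var Colour)
    (m : P → Colour → ℕ) : Prop :=
  ∀ t g, ¬ EnabledC C m t g

/-- The skeletal image of a coloured marking. -/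
def skelCMark {P T Var Colour : Type} (C : ColouredNet P T Var Colour)
    (m : P → Colour → ℕ) : P → ℕ :=
  fun p => ∑ c ∈ C.chi p, m p c

/-- `C` has a deadlock-preserving skeleton: every dead marking of `C` has a dead skeletal
image. -/
def DeadlockPreserving {P T Var Colour : Type} [DecidableEq Colour]
    (C : ColouredNet P T Var Colour) : Prop :=
  ∀ m, IsCMarking C m → DeadC C m → ∀ t, ¬ (skelNet C).Enabled (skelCMark C m) t

/-- The transition class of `t` is minimal w.r.t. the componentwise order on input
vectors `f(t) = (card (Wpre p t))_p`. -/
def MinimalClass {P T Var Colour : Type} (C : ColouredNet P T Var Colour) (t : T) : Prop :=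
  ∀ t', (∀ p, (C.Wpre p t').card ≤ (C.Wpre p t).card) →
    ∀ p, (C.Wpre p t').card = (C.Wpre p t).card

/-- The transition class of `t` is full: every coloured marking matching the input size
requirements of the class enables some transition of the class in some firing mode. -/
def FullClass {P T Var Colour : Type} [DecidableEq Colour]
    (C : ColouredNet P T Var Colour) (t : T) : Prop :=
  ∀ m, IsCMarking C m → (∀ p, ∑ c ∈ C.chi p, m p c = (C.Wpre p t).card) →
    ∃ t' g, (∀ p, (C.Wpre p t').card = (C.Wpre p t).card) ∧ EnabledC C m t' g

/-!
A transition enabled in a coloured marking under some mode is enabled in the skeleton at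
the skeletal image. So if a minimal class `[t]` is not full, a witnessing marking of image
`f(t)` enables nothing below `[t]`, hence nothing at all, while its image enables `t`.
Conversely, if the image of a dead marking `m` enables `t`, pick a minimal class
`[t₀] ≤ [t]` (input vectors are well-founded since there are finitely many places) and
shrink `m` to a marking of image exactly `f(t₀)`; fullness of `[t₀]` enables a transition
there, hence in `m`.
-/

open Finset

theorem exists_le_sum_eq_of_le_sum {α : Type*} (s : Finset α) (f : α → ℕ) {k : ℕ}
    (hk : k ≤ ∑ c ∈ s, f c) : ∃ g ≤ f, (∀ c ∉ s, g c = 0) ∧ ∑ c ∈ s, g c = k := by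
  classical
  induction k with
  | zero => exact ⟨0, fun _ => Nat.zero_le _, fun _ _ => rfl, by simp⟩
  | succ k ih =>
    obtain ⟨g, hgf, hgs, hsum⟩ := ih (Nat.le_of_succ_le hk)
    obtain ⟨c, hc, hlt⟩ := exists_lt_of_sum_lt (hsum.trans_lt hk)
    refine ⟨g + Pi.single c 1, fun a => ?_, fun a ha => ?_, ?_⟩
    · rcases eq_or_ne a c with rfl | hne
      · simpa using hlt
      · simpa [hne] using hgf a
    · simp [hgs a ha, ne_of_mem_of_not_mem hc ha |>.symm]
    · simp only [Pi.add_apply]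
      rw [sum_add_distrib, hsum, sum_pi_single' c 1 s, if_pos hc]

section ColouredNet

variable {P T Var Colour : Type} (C : ColouredNet P T Var Colour)

theorem exists_isCMarking_le_skelCMark_eq {m : P → Colour → ℕ} {n : P → ℕ}
    (hn : n ≤ skelCMark C m) :
    ∃ m' ≤ m, IsCMarking C m' ∧ skelCMark C m' = n := by
  choose m' hle hsupp hsum using fun p => exists_le_sum_eq_of_le_sum (C.chi p) (m p) (hn p)
  exact ⟨m', hle, hsupp, funext hsum⟩

theorem exists_minimalClass_le [Finite P] (t : T) :
    ∃ t₀, (∀ p, (C.Wpre p t₀).card ≤ (C.Wpre p t).card) ∧ MinimalClass C t₀ := by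
  let f : T → P → ℕ := fun t p => (C.Wpre p t).card
  obtain ⟨t₀, ht₀, hmin⟩ :=
    (InvImage.wf f wellFounded_lt).has_min {t' | f t' ≤ f t} ⟨t, le_refl (f t)⟩
  refine ⟨t₀, ht₀, fun t' ht' => congrFun ?_⟩
  have ht' : f t' ≤ f t₀ := ht'
  exact ht'.eq_of_not_lt (hmin t' (ht'.trans ht₀))

variable [DecidableEq Colour] {C}

theorem EnabledC.mono {m m' : P → Colour → ℕ} {t : T} {g : Var → Colour}
    (h : EnabledC C m t g) (hle : m ≤ m') : EnabledC C m' t g :=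
  ⟨h.1, fun p c => (h.2 p c).trans (hle p c)⟩

theorem EnabledC.skelNet_enabled {m : P → Colour → ℕ} {t : T} {g : Var → Colour}
    (h : EnabledC C m t g) :
    (skelNet C).Enabled (skelCMark C m) t := fun p =>
  calc (C.Wpre p t).card
      = ∑ c ∈ C.chi p, ((C.Wpre p t).filter (fun x => g x = c)).card :=
        card_eq_sum_card_fiberwise fun x hx => h.1.1 p x hx
    _ ≤ ∑ c ∈ C.chi p, m p c := sum_le_sum fun c _ => h.2 p c

theorem DeadlockPreserving.fullClass (h : DeadlockPreserving C) {t : T}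
    (ht : MinimalClass C t) : FullClass C t := by
  intro m hm hsize
  by_contra! hnone
  refine h m hm (fun t' g hE => hnone t' g (ht t' fun p => ?_) hE) t fun p => (hsize p).ge
  exact (hE.skelNet_enabled p).trans (hsize p).le

theorem deadlockPreserving_of_forall_minimalClass_fullClass [Finite P]
    (h : ∀ t, MinimalClass C t → FullClass C t) : DeadlockPreserving C := by
  intro m _ hdead t hen
  obtain ⟨t₀, hle, hmin⟩ := exists_minimalClass_le C t
  obtain ⟨m', hm'le, hm', hsize⟩ :=
    exists_isCMarking_le_skelCMark_eq C (n := fun p => (C.Wpre p t₀).card)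
      fun p => (hle p).trans (hen p)
  obtain ⟨t', g, -, hE⟩ := h t₀ hmin m' hm' (congrFun hsize)
  exact hdead t' g (hE.mono hm'le)

end ColouredNet

theorem deadlockPreserving_iff_minimal_full_general
    {P T Var Colour : Type} [Fintype P]
    [DecidableEq Colour]
    (C : ColouredNet P T Var Colour) :
    DeadlockPreserving C ↔ ∀ t, MinimalClass C t → FullClass C t :=
  ⟨fun h _ ht => h.fullClass ht, deadlockPreserving_of_forall_minimalClass_fullClass⟩

/-- A uniform coloured net has a deadlock-preserving skeleton iff every
minimal transition class is full. -/
theorem deadlockPreserving_iff_minimal_full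
    {P T Var Colour : Type} [Fintype P] [Fintype T] [Fintype Var] [Fintype Colour]
    [DecidableEq Colour]
    (C : ColouredNet P T Var Colour) :
    DeadlockPreserving C ↔ ∀ t, MinimalClass C t → FullClass C t :=
  deadlockPreserving_iff_minimal_full_general C
end

section
/- Let C be a uniform coloured Petri net with a deadlock-preserving skeleton, U its unfolding and S its skeleton. Then the net morphism μ from U to S (μ([p,c]) = p, μ([t,g]) = t), extended to markings, induces a simulation relation between the reachability graphs of U and S viewed as Kripke structures (with silent τ self-loops added at all deadlock states). Consequently every ACTL* formula that holds in S also holds in U. -/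
set_option autoImplicit false

/-- A Kripke structure (transition labels are irrelevant for the CTL* semantics and
omitted); `L` is the labelling with atomic propositions. -/
structure Kripke (S AP : Type) where
  init : S
  R : S → S → Prop
  L : S → AP → Prop

/-- Infinite paths of a Kripke structure. -/
def Kripke.IsPath {S AP : Type} (K : Kripke S AP) (π : ℕ → S) : Prop :=
  ∀ i, K.R (π i) (π (i + 1))

/-- The suffix of a path starting at position `i`. -/
def pshift {S : Type} (π : ℕ → S) (i : ℕ) : ℕ → S := fun j => π (i + j)

/-- Syntax of CTL*: atomic propositions, Boolean connectives, temporal operators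
X, F, G, U, W, R and path quantifiers A, E. -/
inductive CTLs (AP : Type) : Type where
  | atom : AP → CTLs AP
  | conj : CTLs AP → CTLs AP → CTLs AP
  | disj : CTLs AP → CTLs AP → CTLs AP
  | neg : CTLs AP → CTLs AP
  | next : CTLs AP → CTLs AP
  | fut : CTLs AP → CTLs AP
  | glob : CTLs AP → CTLs AP
  | untl : CTLs AP → CTLs AP → CTLs AP
  | wuntl : CTLs AP → CTLs AP → CTLs AP
  | release : CTLs AP → CTLs AP → CTLs AP
  | aquant : CTLs AP → CTLs AP
  | equant : CTLs AP → CTLs AP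

/-- Satisfaction of a CTL* formula on an (infinite) path of a Kripke structure;
state formulas are evaluated at the first state of the path. -/
def pathSat {S AP : Type} (K : Kripke S AP) : CTLs AP → (ℕ → S) → Prop
  | .atom a, π => K.L (π 0) a
  | .conj φ ψ, π => pathSat K φ π ∧ pathSat K ψ π
  | .disj φ ψ, π => pathSat K φ π ∨ pathSat K ψ π
  | .neg φ, π => ¬ pathSat K φ π
  | .next φ, π => pathSat K φ (pshift π 1)
  | .fut φ, π => ∃ i, pathSat K φ (pshift π i)
  | .glob φ, π => ∀ i, pathSat K φ (pshift π i)
  | .untl φ ψ, π => ∃ i, pathSat K ψ (pshift π i) ∧ ∀ j, j < i → pathSat K φ (pshift π j)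
  | .wuntl φ ψ, π => (∀ i, pathSat K φ (pshift π i)) ∨
      (∃ i, pathSat K ψ (pshift π i) ∧ ∀ j, j < i → pathSat K φ (pshift π j))
  | .release φ ψ, π => ∀ i, pathSat K ψ (pshift π i) ∨ ∃ j, j < i ∧ pathSat K φ (pshift π j)
  | .aquant φ, π => ∀ π', K.IsPath π' → π' 0 = π 0 → pathSat K φ π'
  | .equant φ, π => ∃ π', K.IsPath π' ∧ π' 0 = π 0 ∧ pathSat K φ π'

/-- A state satisfies a CTL* formula if all paths of the structure starting in it do. -/
def stateSat {S AP : Type} (K : Kripke S AP) (q : S) (φ : CTLs AP) : Prop :=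
  ∀ π, K.IsPath π → π 0 = q → pathSat K φ π

/-- A Kripke structure satisfies a CTL* formula if its initial state does
(for path formulas: if all paths starting in the initial state do). -/
def kripkeSat {S AP : Type} (K : Kripke S AP) (φ : CTLs AP) : Prop :=
  stateSat K K.init φ

/-- The fragment ACTL* of CTL*: formulas containing neither `E` nor `¬`. -/
def IsACTLs {AP : Type} : CTLs AP → Prop
  | .atom _ => True
  | .conj φ ψ => IsACTLs φ ∧ IsACTLs ψ
  | .disj φ ψ => IsACTLs φ ∧ IsACTLs ψ
  | .neg _ => False
  | .next φ => IsACTLs φ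
  | .fut φ => IsACTLs φ
  | .glob φ => IsACTLs φ
  | .untl φ ψ => IsACTLs φ ∧ IsACTLs ψ
  | .wuntl φ ψ => IsACTLs φ ∧ IsACTLs ψ
  | .release φ ψ => IsACTLs φ ∧ IsACTLs ψ
  | .aquant φ => IsACTLs φ
  | .equant _ => False

/-- Abstraction relation between Kripke structures: a surjective function on states such
that an abstract state satisfies an atomic proposition iff all of its concrete preimages do. -/
def IsAbstraction {Q Q' AP : Type} (K : Kripke Q AP) (K' : Kripke Q' AP) (σ : Q → Q') :
    Prop :=
  Function.Surjective σ ∧ ∀ q' a, K'.L q' a ↔ ∀ q, σ q = q' → K.L q a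

/-- Simulation relation: an abstraction relation that transfers reachability (`→*`). -/
def IsSimulation {Q Q' AP : Type} (K : Kripke Q AP) (K' : Kripke Q' AP) (σ : Q → Q') :
    Prop :=
  IsAbstraction K K' σ ∧
  ∀ q q₁ q', Relation.ReflTransGen K.R q q₁ → σ q = q' →
    ∃ q₁', Relation.ReflTransGen K'.R q' q₁' ∧ σ q₁ = q₁'

/-- The Kripke structure of a P/T net: states are markings, transitions are firings, and
a silent τ self-loop is added at every deadlock (dead marking). -/
def KripkeOfNet {P T A : Type} (N : PTNet P T) (L : (P → ℕ) → A → Prop) :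
    Kripke (P → ℕ) A where
  init := N.m0
  R := fun m m' => (∃ t, N.Fires m t m') ∨ ((∀ t, ¬ N.Enabled m t) ∧ m' = m)
  L := L

/-!
Summing over the colours of each place turns a firing of `[t,g]` in the unfolding into a
firing of `t` in the skeleton, because `card (W p t)` is the number of variables of `W p t`
that `g` sends to each colour, summed over the colours. A deadlock of the unfolding is a
dead coloured marking, whose skeletal image is dead by deadlock preservation, so τ-loops
are mapped to τ-loops as well. Hence `skel` maps paths of the unfolding to paths of the
skeleton, and since both evaluate atomic propositions identically on `m` and `skel C m`,
a formula without `E` and `¬` holding on the image of a path holds on the path itself.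
-/

namespace Kripke

variable {Q Q' AP : Type} {K : Kripke Q AP} {K' : Kripke Q' AP} {σ : Q → Q'}

lemma IsPath.shift {π : ℕ → Q} (hπ : K.IsPath π) (i : ℕ) : K.IsPath (pshift π i) :=
  fun j => by simpa only [pshift, Nat.add_assoc] using hπ (i + j)

lemma IsPath.map (hstep : ∀ q q₁, K.R q q₁ → K'.R (σ q) (σ q₁)) {π : ℕ → Q}
    (hπ : K.IsPath π) : K'.IsPath (σ ∘ π) :=
  fun i => hstep _ _ (hπ i)

lemma pathSat_of_pathSat_comp (hstep : ∀ q q₁, K.R q q₁ → K'.R (σ q) (σ q₁))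
    (hL : ∀ q a, K'.L (σ q) a → K.L q a) {φ : CTLs AP} (hφ : IsACTLs φ) {π : ℕ → Q}
    (hπ : K.IsPath π) (h : pathSat K' φ (σ ∘ π)) : pathSat K φ π := by
  induction φ generalizing π with
  | atom a => exact hL _ _ h
  | conj φ ψ ihφ ihψ => exact ⟨ihφ hφ.1 hπ h.1, ihψ hφ.2 hπ h.2⟩
  | disj φ ψ ihφ ihψ => exact h.imp (ihφ hφ.1 hπ) (ihψ hφ.2 hπ)
  | neg => exact hφ.elim
  | next φ ih => exact ih hφ (hπ.shift 1) h
  | fut φ ih =>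
    obtain ⟨i, hi⟩ := h
    exact ⟨i, ih hφ (hπ.shift i) hi⟩
  | glob φ ih => exact fun i => ih hφ (hπ.shift i) (h i)
  | untl φ ψ ihφ ihψ =>
    obtain ⟨i, hψ, hφs⟩ := h
    exact ⟨i, ihψ hφ.2 (hπ.shift i) hψ, fun j hj => ihφ hφ.1 (hπ.shift j) (hφs j hj)⟩
  | wuntl φ ψ ihφ ihψ =>
    rcases h with hφs | ⟨i, hψ, hφs⟩
    · exact Or.inl fun i => ihφ hφ.1 (hπ.shift i) (hφs i)
    · exact Or.inr ⟨i, ihψ hφ.2 (hπ.shift i) hψ,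
        fun j hj => ihφ hφ.1 (hπ.shift j) (hφs j hj)⟩
  | release φ ψ ihφ ihψ =>
    intro i
    rcases h i with hψ | ⟨j, hj, hφj⟩
    · exact Or.inl (ihψ hφ.2 (hπ.shift i) hψ)
    · exact Or.inr ⟨j, hj, ihφ hφ.1 (hπ.shift j) hφj⟩
  | aquant φ ih =>
    intro ρ hρ hρ0
    exact ih hφ hρ (h (σ ∘ ρ) (hρ.map hstep) (congrArg σ hρ0))
  | equant => exact hφ.elim

lemma kripkeSat_of_kripkeSat_map (hstep : ∀ q q₁, K.R q q₁ → K'.R (σ q) (σ q₁))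
    (hL : ∀ q a, K'.L (σ q) a → K.L q a) (hinit : σ K.init = K'.init) {φ : CTLs AP}
    (hφ : IsACTLs φ) (h : kripkeSat K' φ) : kripkeSat K φ :=
  fun π hπ hπ0 =>
    pathSat_of_pathSat_comp hstep hL hφ hπ (h _ (hπ.map hstep) (by simp [hπ0, hinit]))

lemma isSimulation_of_surjective (hsurj : Function.Surjective σ)
    (hL : ∀ q a, K'.L (σ q) a ↔ K.L q a) (hstep : ∀ q q₁, K.R q q₁ → K'.R (σ q) (σ q₁)) :
    IsSimulation K K' σ := by
  refine ⟨⟨hsurj, fun q' a => ⟨?_, ?_⟩⟩, ?_⟩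
  · rintro h q rfl
    exact (hL q a).1 h
  · intro h
    obtain ⟨q, rfl⟩ := hsurj q'
    exact (hL q a).2 (h q rfl)
  · rintro q q₁ _ hq₁ rfl
    exact ⟨σ q₁, Relation.ReflTransGen.lift σ hstep _ _ hq₁, rfl⟩

end Kripke

section Skeleton

variable {P T Var Colour : Type} [DecidableEq Colour] (C : ColouredNet P T Var Colour)

lemma card_eq_sum_attach_card_filter {p : P} {s : Finset Var} {g : Var → Colour}
    (h : ∀ x ∈ s, g x ∈ C.chi p) :
    s.card = ∑ c ∈ (C.chi p).attach, (s.filter fun x => g x = c.val).card := by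
  rw [Finset.sum_attach (C.chi p) fun c => (s.filter fun x => g x = c).card]
  exact Finset.card_eq_sum_card_fiberwise h

variable {C}

lemma PTNet.Fires.map_skel {m m' : UPlace C → ℕ} {tg : UTrans C}
    (h : (unfoldNet C).Fires m tg m') :
    (skelNet C).Fires (skel C m) tg.val.1 (skel C m') := by
  obtain ⟨hen, heq⟩ := h
  have hpre : ∀ p, (skelNet C).pre p tg.val.1 =
      ∑ c ∈ (C.chi p).attach, (unfoldNet C).pre ⟨(p, c.val), c.property⟩ tg :=
    fun p => card_eq_sum_attach_card_filter C (tg.property.1 p)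
  have hpost : ∀ p, (skelNet C).post tg.val.1 p =
      ∑ c ∈ (C.chi p).attach, (unfoldNet C).post tg ⟨(p, c.val), c.property⟩ :=
    fun p => card_eq_sum_attach_card_filter C (tg.property.2.1 p)
  have hen' : (skelNet C).Enabled (skel C m) tg.val.1 :=
    fun p => (hpre p).trans_le (Finset.sum_le_sum fun c _ => hen _)
  refine ⟨hen', fun p => ?_⟩
  have hbalance : skel C m' p + (skelNet C).pre p tg.val.1 =
      skel C m p + (skelNet C).post tg.val.1 p := by
    rw [hpre, hpost, skel, skel, ← Finset.sum_add_distrib, ← Finset.sum_add_distrib]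
    refine Finset.sum_congr rfl fun c _ => ?_
    have hle := hen ⟨(p, c.val), c.property⟩
    have hfire := heq ⟨(p, c.val), c.property⟩
    omega
  have hle := hen' p
  omega

variable (C) in
def toCMarking (m : UPlace C → ℕ) : P → Colour → ℕ :=
  fun p c => if h : c ∈ C.chi p then m ⟨(p, c), h⟩ else 0

lemma isCMarking_toCMarking (m : UPlace C → ℕ) : IsCMarking C (toCMarking C m) :=
  fun _ _ hc => dif_neg hc

lemma skelCMark_toCMarking (m : UPlace C → ℕ) : skelCMark C (toCMarking C m) = skel C m := by
  funext p
  rw [skelCMark, skel, ← Finset.sum_attach (C.chi p) (toCMarking C m p)]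
  exact Finset.sum_congr rfl fun c _ => dif_pos c.property

lemma deadC_toCMarking {m : UPlace C → ℕ} (hdead : ∀ tg, ¬ (unfoldNet C).Enabled m tg) :
    DeadC C (toCMarking C m) := by
  intro t g ⟨hmode, hle⟩
  refine hdead ⟨(t, g), hmode⟩ fun ⟨(p, c), hc⟩ => ?_
  have hle := hle p c
  rwa [toCMarking, dif_pos hc] at hle

lemma DeadlockPreserving.skel_dead (hdp : DeadlockPreserving C) {m : UPlace C → ℕ}
    (hdead : ∀ tg, ¬ (unfoldNet C).Enabled m tg) :
    ∀ t, ¬ (skelNet C).Enabled (skel C m) t := by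
  simpa only [skelCMark_toCMarking] using
    hdp _ (isCMarking_toCMarking m) (deadC_toCMarking hdead)

lemma DeadlockPreserving.kripkeOfNet_step_skel {A A' : Type}
    {L : (UPlace C → ℕ) → A → Prop} {L' : (P → ℕ) → A' → Prop}
    (hdp : DeadlockPreserving C) (m m' : UPlace C → ℕ)
    (h : (KripkeOfNet (unfoldNet C) L).R m m') :
    (KripkeOfNet (skelNet C) L').R (skel C m) (skel C m') := by
  rcases h with ⟨tg, hfires⟩ | ⟨hdead, rfl⟩
  · exact Or.inl ⟨tg.val.1, hfires.map_skel⟩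
  · exact Or.inr ⟨hdp.skel_dead hdead, rfl⟩

lemma skel_m0 : skel C (unfoldNet C).m0 = (skelNet C).m0 :=
  funext fun p => Finset.sum_attach (C.chi p) (C.m0 p)

lemma skel_surjective_s8 : Function.Surjective (skel C) := by
  intro n
  let c₀ : P → Colour := fun p => (C.chi_nonempty p).choose
  refine ⟨fun u => if u.val.2 = c₀ u.val.1 then n u.val.1 else 0, funext fun p => ?_⟩
  rw [skel, Finset.sum_attach (C.chi p) fun c => if c = c₀ p then n p else 0,
    Finset.sum_ite_eq' (C.chi p) (c₀ p), if_pos (C.chi_nonempty p).choose_spec]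

lemma sum_uPlace [Fintype P] [Fintype Colour] {M : Type} [AddCommMonoid M]
    (f : UPlace C → M) :
    ∑ u : UPlace C, f u = ∑ p : P, ∑ c ∈ (C.chi p).attach, f ⟨(p, c.val), c.property⟩ := by
  rw [Fintype.sum_equiv (Equiv.subtypeProdEquivSigmaSubtype fun p c => c ∈ C.chi p) f
    (fun x => f ⟨(x.1, x.2.val), x.2.property⟩) fun _ => rfl, Fintype.sum_sigma]
  rfl

lemma apsatPT_skel_iff_apsatU [Fintype P] [Fintype Colour] (m : UPlace C → ℕ)
    (a : AtomicProp P) : APsatPT a (skel C m) ↔ APsatU C a m := by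
  simp only [APsatU, APsatPT, sum_uPlace, skel, Nat.cast_sum, Finset.mul_sum]

end Skeleton

theorem deadlockPreserving_skeleton_simulation_general
    {P T Var Colour : Type} [Fintype P] [Fintype Colour]
    [DecidableEq Colour]
    (C : ColouredNet P T Var Colour)
    (hdp : DeadlockPreserving C) :
    IsSimulation (KripkeOfNet (unfoldNet C) (fun m a => APsatU C a m))
        (KripkeOfNet (skelNet C) (fun m a => APsatPT a m)) (skel C) ∧
      ∀ φ : CTLs (AtomicProp P), IsACTLs φ →
        kripkeSat (KripkeOfNet (skelNet C) (fun m a => APsatPT a m)) φ →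
        kripkeSat (KripkeOfNet (unfoldNet C) (fun m a => APsatU C a m)) φ :=
  ⟨Kripke.isSimulation_of_surjective skel_surjective_s8 apsatPT_skel_iff_apsatU
      hdp.kripkeOfNet_step_skel,
    fun φ hφ => Kripke.kripkeSat_of_kripkeSat_map hdp.kripkeOfNet_step_skel
      (by exact fun m a => (apsatPT_skel_iff_apsatU m a).1) skel_m0 hφ⟩

/-- For a uniform coloured net with a deadlock-preserving skeleton, the
net morphism from the unfolding to the skeleton, extended to markings, induces a
simulation relation between the reachability graphs viewed as Kripke structures (with τ
self-loops at deadlocks); consequently every ACTL* formula that holds in the skeleton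
holds in the unfolding. -/
theorem deadlockPreserving_skeleton_simulation
    {P T Var Colour : Type} [Fintype P] [Fintype T] [Fintype Var] [Fintype Colour]
    [DecidableEq Colour]
    (C : ColouredNet P T Var Colour)
    (hdp : DeadlockPreserving C) :
    IsSimulation (KripkeOfNet (unfoldNet C) (fun m a => APsatU C a m))
        (KripkeOfNet (skelNet C) (fun m a => APsatPT a m)) (skel C) ∧
      ∀ φ : CTLs (AtomicProp P), IsACTLs φ →
        kripkeSat (KripkeOfNet (skelNet C) (fun m a => APsatPT a m)) φ →
        kripkeSat (KripkeOfNet (unfoldNet C) (fun m a => APsatU C a m)) φ :=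
  deadlockPreserving_skeleton_simulation_general C hdp
end
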